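/- Let ℏ, m, g > 0. Let ψ⁽¹⁾ : ℝ × ℝ → ℂ and ψ⁽²⁾ : ℝ × [0,∞) × ℝ → ℂ be smooth (ψ⁽²⁾ smooth up to the boundary y = 0), with last argument the time t. Suppose that for all x and t the Neumann-type interior–boundary condition ∂_y ψ⁽²⁾(x,0,t) = (2mg/ℏ²) ψ⁽¹⁾(x,t) holds, and that the Schrödinger equations iℏ ∂_t ψ⁽¹⁾(x,t) = −(ℏ²/2m) ∂²ₓ ψ⁽¹⁾(x,t) + g ψ⁽²⁾(x,0,t) and iℏ ∂_t ψ⁽²⁾(x,y,t) = −(ℏ²/2m)(∂²ₓ + ∂²_y) ψ⁽²⁾(x,y,t) hold for all x, all y > 0 and all t. Then for all x and t: ∂_t |ψ⁽¹⁾(x,t)|² = −∂ₓ j⁽¹⁾(x,t) − j_y⁽²⁾(x,0,t), where j⁽¹⁾ = (ℏ/m) Im[ψ⁽¹⁾* ∂ₓ ψ⁽¹⁾] and j_y⁽²⁾ = (ℏ/m) Im[ψ⁽²⁾* ∂_y ψ⁽²⁾]. -/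

import Mathlib

open Complex

/-- **Probability balance for the toy IBC model (Neumann-type IBC).**
Configuration space: `Q¹ = ℝ` and the half plane `Q² = {(x,y) : y ≥ 0}`; `ψ2` is smooth
up to the boundary `y = 0`, formalized as a smooth function on all of `ℝ × ℝ × ℝ`
(last argument is time). -/
theorem probability_balance_neumann_IBC
    (ℏ m g : ℝ) (hℏ : 0 < ℏ) (hm : 0 < m) (hg : 0 < g)
    (ψ1 : ℝ → ℝ → ℂ) (ψ2 : ℝ → ℝ → ℝ → ℂ)
    (hψ1 : ContDiff ℝ (⊤ : ℕ∞) (fun p : ℝ × ℝ => ψ1 p.1 p.2))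
    (hψ2 : ContDiff ℝ (⊤ : ℕ∞) (fun p : ℝ × ℝ × ℝ => ψ2 p.1 p.2.1 p.2.2))
    -- Neumann-type interior–boundary condition: ∂_y ψ²(x,0,t) = (2mg/ℏ²) ψ¹(x,t)
    (hIBC : ∀ x t : ℝ, deriv (fun v => ψ2 x v t) 0 = (2 * m * g / ℏ ^ 2 : ℝ) * ψ1 x t)
    -- Schrödinger equation on the first sector:
    -- iℏ ∂_t ψ¹ = −(ℏ²/2m) ∂²ₓ ψ¹ + g ψ²(x,0,t)
    (hSch1 : ∀ x t : ℝ,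
      Complex.I * (ℏ : ℂ) * deriv (fun s => ψ1 x s) t
        = -((ℏ : ℂ) ^ 2 / (2 * (m : ℂ))) * deriv (deriv (fun u => ψ1 u t)) x
          + (g : ℂ) * ψ2 x 0 t)
    -- Schrödinger equation on the second sector, for y > 0:
    (hSch2 : ∀ x y t : ℝ, 0 < y →
      Complex.I * (ℏ : ℂ) * deriv (fun s => ψ2 x y s) t
        = -((ℏ : ℂ) ^ 2 / (2 * (m : ℂ)))
            * (deriv (deriv (fun u => ψ2 u y t)) x
               + deriv (deriv (fun v => ψ2 x v t)) y)) :
    -- conclusion: ∂_t |ψ¹|² = −∂ₓ j¹ − j_y²(x,0,t)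
    ∀ x t : ℝ,
      deriv (fun s => ‖ψ1 x s‖ ^ 2) t
        = - deriv (fun u =>
              (ℏ / m) * ((starRingEnd ℂ) (ψ1 u t) * deriv (fun w => ψ1 w t) u).im) x
          - (ℏ / m) * ((starRingEnd ℂ) (ψ2 x 0 t) * deriv (fun v => ψ2 x v t) 0).im := by
  intro x t
  have hψ1' : ContDiff ℝ ((⊤:ℕ∞):WithTop ℕ∞) (fun p : ℝ × ℝ => ψ1 p.1 p.2) :=
    hψ1.of_le (by simp)
  have h1 : (1:WithTop ℕ∞) ≤ ((⊤:ℕ∞):WithTop ℕ∞) := by exact_mod_cast le_top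
  -- time slice
  have hχ : ContDiff ℝ ((⊤:ℕ∞):WithTop ℕ∞) (fun s : ℝ => ψ1 x s) :=
    hψ1'.comp (contDiff_const.prodMk contDiff_id)
  -- space slice and its derivatives
  have hφ : ContDiff ℝ ((⊤:ℕ∞):WithTop ℕ∞) (fun u : ℝ => ψ1 u t) :=
    hψ1'.comp (contDiff_id.prodMk contDiff_const)
  have hφ' : ContDiff ℝ ((⊤:ℕ∞):WithTop ℕ∞) (deriv (fun u : ℝ => ψ1 u t)) :=
    (contDiff_infty_iff_deriv.mp hφ).2
  set a : ℂ := ψ1 x t with ha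
  set w : ℂ := ψ2 x 0 t with hw
  set d : ℂ := deriv (fun s => ψ1 x s) t with hd
  set b : ℂ := deriv (deriv (fun u => ψ1 u t)) x with hb
  set c : ℂ := deriv (fun u => ψ1 u t) x with hc
  -- LHS computation
  have hdχ : HasDerivAt (fun s => ψ1 x s) d t :=
    ((hχ.differentiable (by simp)) t).hasDerivAt
  have hL : HasDerivAt (fun s : ℝ => ‖ψ1 x s‖ ^ 2)
      ((starRingEnd ℂ) d * a + (starRingEnd ℂ) a * d).re t := by
    have h2 : HasDerivAt (fun s => (starRingEnd ℂ) (ψ1 x s) * ψ1 x s)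
        ((starRingEnd ℂ) d * a + (starRingEnd ℂ) a * d) t := by
      exact (hdχ.star.mul hdχ)
    have h3 := Complex.reCLM.hasFDerivAt.comp_hasDerivAt t h2
    have h4 : (fun s => ((starRingEnd ℂ) (ψ1 x s) * ψ1 x s).re)
        = fun s : ℝ => ‖ψ1 x s‖ ^ 2 := by
      funext s
      rw [Complex.conj_mul']
      rw [← Complex.ofReal_pow, Complex.ofReal_re]
    have h3' : HasDerivAt (fun s => ((starRingEnd ℂ) (ψ1 x s) * ψ1 x s).re)
        ((starRingEnd ℂ) d * a + (starRingEnd ℂ) a * d).re t := h3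
    rw [h4] at h3'
    exact h3'
  -- RHS first-term computation
  have hdφ : HasDerivAt (fun u => ψ1 u t) c x := ((hφ.differentiable (by simp)) x).hasDerivAt
  have hdφ' : HasDerivAt (deriv (fun u => ψ1 u t)) b x :=
    ((hφ'.differentiable (by simp)) x).hasDerivAt
  have hR : HasDerivAt (fun u : ℝ =>
      (ℏ / m) * ((starRingEnd ℂ) (ψ1 u t) * deriv (fun w => ψ1 w t) u).im)
      ((ℏ / m) * ((starRingEnd ℂ) c * c + (starRingEnd ℂ) a * b).im) x := by
    have h2 : HasDerivAt (fun u => (starRingEnd ℂ) (ψ1 u t) * deriv (fun w => ψ1 w t) u)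
        ((starRingEnd ℂ) c * c + (starRingEnd ℂ) a * b) x := hdφ.star.mul hdφ'
    have h3 := Complex.imCLM.hasFDerivAt.comp_hasDerivAt x h2
    simpa using h3.const_mul (ℏ / m)
  rw [hL.deriv, hR.deriv, hIBC x t, ← ha]
  -- the Schrödinger equation, componentwise
  have hS := hSch1 x t
  rw [← hw] at hS
  have hcast : -((ℏ : ℂ) ^ 2 / (2 * (m : ℂ))) = ((-(ℏ^2/(2*m)) : ℝ) : ℂ) := by
    push_cast; ring
  rw [hcast] at hS
  rw [Complex.ext_iff] at hS
  obtain ⟨hSre, hSim⟩ := hS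
  simp only [Complex.mul_re, Complex.mul_im, Complex.add_re, Complex.add_im,
    Complex.I_re, Complex.I_im, Complex.ofReal_re, Complex.ofReal_im,
    Complex.conj_re, Complex.conj_im] at hSre hSim ⊢
  have hℏ0 : ℏ ≠ 0 := ne_of_gt hℏ
  have hm0 : m ≠ 0 := ne_of_gt hm
  rw [← hd, ← hb] at hSre hSim
  field_simp at hSre hSim ⊢
  linear_combination a.re * hSim - a.im * hSre
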